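/- arXiv:2412.05304 — 4 statements merged into one kernel-verified Lean document; each statement's English description precedes it below -/
import Mathlib

section
/- For any path-connected, locally path-connected pointed space (X, x₀), the fundamental group π₁(X, x₀) endowed with the whisker topology is a left-topological group: for every [η] ∈ π₁(X, x₀), the left translation λ_[η] : π₁^wh(X,x₀) → π₁^wh(X,x₀) given by λ_[η]([κ]) = [η]·[κ] is continuous (indeed a homeomorphism, since λ_[η](B([ζ],U)) = B([η·ζ],U)). -/
/-!
Left translation by `[η]` pulls the basic set `B([ζ],U)` back to `B([η⁻¹·ζ],U)`, so it is
continuous; its inverse is left translation by `[η⁻¹]`, hence it is a homeomorphism.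
-/

open Set TopologicalSpace

attribute [local instance] Path.Homotopic.setoid

universe u v

variable {X : Type u} [TopologicalSpace X]

/-- The basic whisker-topology set `B([ζ],U)`: all classes of the form `[ζ·η]`
where `η` is a loop based at `x₀` with image in `U`. -/
def whiskerB {x₀ : X} (ζ : Path.Homotopic.Quotient x₀ x₀) (U : Set X) :
    Set (Path.Homotopic.Quotient x₀ x₀) :=
  {g | ∃ η : Path x₀ x₀, Set.range η ⊆ U ∧ g = ζ.trans ⟦η⟧}

/-- The whisker topology on `π₁(X, x₀)`, generated by the basic sets `B([ζ],U)`
for `U` an open neighborhood of `x₀`. -/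
def whiskerTopology (x₀ : X) : TopologicalSpace (Path.Homotopic.Quotient x₀ x₀) :=
  TopologicalSpace.generateFrom
    {S | ∃ (ζ : Path.Homotopic.Quotient x₀ x₀) (U : Set X),
      IsOpen U ∧ x₀ ∈ U ∧ S = whiskerB ζ U}

/-- Inversion `[ζ] ↦ [ζ⁻]` on `π₁(X, x₀)`. -/
def whiskerInv {x₀ : X} : Path.Homotopic.Quotient x₀ x₀ → Path.Homotopic.Quotient x₀ x₀ :=
  Quotient.map Path.symm (fun _ _ h => Nonempty.map Path.Homotopy.symm₂ h)

/-- `π₁^wh(X, x₀)` is a topological group: the multiplication `([ζ],[η]) ↦ [ζ·η]`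
is jointly continuous and inversion `[ζ] ↦ [ζ⁻]` is continuous, with respect to
the whisker topology. -/
def IsWhiskerTopGroup (x₀ : X) : Prop :=
  letI := whiskerTopology x₀
  Continuous (fun p : Path.Homotopic.Quotient x₀ x₀ × Path.Homotopic.Quotient x₀ x₀ =>
    p.1.trans p.2) ∧
  Continuous (whiskerInv (x₀ := x₀))


namespace Path.Homotopic.Quotient

open scoped Topology

variable {x₀ : X}

noncomputable def leftTransEquiv (η : Path.Homotopic.Quotient x₀ x₀) :
    Path.Homotopic.Quotient x₀ x₀ ≃ Path.Homotopic.Quotient x₀ x₀ where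
  toFun κ := η.trans κ
  invFun κ := η.symm.trans κ
  left_inv κ := by simp only [← trans_assoc, symm_trans, refl_trans]
  right_inv κ := by simp only [← trans_assoc, trans_symm, refl_trans]

theorem preimage_trans_whiskerB (η ζ : Path.Homotopic.Quotient x₀ x₀) (U : Set X) :
    (η.trans ·) ⁻¹' whiskerB ζ U = whiskerB (η.symm.trans ζ) U := by
  ext κ
  refine _root_.exists_congr fun γ => and_congr_right fun _ => ?_
  change η.trans κ = ζ.trans (mk γ) ↔ κ = (η.symm.trans ζ).trans (mk γ)
  rw [trans_assoc]
  exact (leftTransEquiv η).eq_symm_apply.symm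

theorem continuous_trans_left (η : Path.Homotopic.Quotient x₀ x₀) :
    Continuous[whiskerTopology x₀, whiskerTopology x₀] (η.trans ·) := by
  rw [whiskerTopology, continuous_generateFrom_iff]
  rintro _ ⟨ζ, U, hU, hx₀U, rfl⟩
  rw [preimage_trans_whiskerB]
  exact isOpen_generateFrom_of_mem ⟨η.symm.trans ζ, U, hU, hx₀U, rfl⟩

end Path.Homotopic.Quotient

open Path.Homotopic.Quotient in
theorem whisker_left_translation_continuous_general
    {X : Type u} [TopologicalSpace X]
    (x₀ : X) (η : Path.Homotopic.Quotient x₀ x₀) :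
    (@Continuous _ _ (whiskerTopology x₀) (whiskerTopology x₀)
      fun κ : Path.Homotopic.Quotient x₀ x₀ => η.trans κ) ∧
    @IsHomeomorph _ _ (whiskerTopology x₀) (whiskerTopology x₀)
      (fun κ : Path.Homotopic.Quotient x₀ x₀ => η.trans κ) := by
  let _ := whiskerTopology x₀
  refine ⟨continuous_trans_left η, ?_⟩
  exact (Homeomorph.mk (leftTransEquiv η) (continuous_trans_left η)
    (continuous_trans_left η.symm)).isHomeomorph

/-- For any path-connected, locally path-connected pointed space `(X, x₀)`,
`π₁^wh(X, x₀)` is a left-topological group: every left translation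
`λ_[η] : [κ] ↦ [η]·[κ]` is continuous, and indeed a homeomorphism. -/
theorem whisker_left_translation_continuous
    {X : Type u} [TopologicalSpace X] [PathConnectedSpace X] [LocallyPathConnectedSpace X]
    (x₀ : X) (η : Path.Homotopic.Quotient x₀ x₀) :
    (@Continuous _ _ (whiskerTopology x₀) (whiskerTopology x₀)
      fun κ : Path.Homotopic.Quotient x₀ x₀ => η.trans κ) ∧
    @IsHomeomorph _ _ (whiskerTopology x₀) (whiskerTopology x₀)
      (fun κ : Path.Homotopic.Quotient x₀ x₀ => η.trans κ) :=
  whisker_left_translation_continuous_general x₀ η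
end

section
/- Let {(X_i, x_i)}_{i ∈ I} be a family of pointed topological spaces and let ∏_{i∈I} X_i carry the product topology with basepoint (x_i)_{i∈I}. Then the canonical group isomorphism Φ : π₁^wh(∏_{i∈I} X_i, (x_i)) → ∏_{i∈I} π₁^wh(X_i, x_i), defined by Φ([ζ]) = ([p_i ∘ ζ])_{i∈I} where p_i is the i-th projection, is a homeomorphism onto the product of the whisker-topologized fundamental groups (with the product topology). -/
open Set TopologicalSpace

attribute [local instance] Path.Homotopic.setoid

universe u v

variable {X : Type u} [TopologicalSpace X]

/-!
The canonical map is a bijection with inverse `Path.Homotopic.pi`, and a homomorphism because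
composing with a projection commutes with concatenation. Each basic set `B([ζ], U)` is a
neighbourhood of each of its points, so continuity into a whisker topology can be tested on the
basic sets centred at the image point. For a projection `pᵢ`, `B([ζ], pᵢ⁻¹ U)` maps into
`B(pᵢ[ζ], U)`; conversely, whiskers in the factors combine into one whisker in the product, whose
image lies in `U` as soon as the finitely many coordinates that `U` constrains do.
-/

open Topology

attribute [local instance] whiskerTopology

theorem Path.Homotopic.Quotient.map_trans {Y Z : Type*} [TopologicalSpace Y] [TopologicalSpace Z]
    {a b c : Y} (p : Path.Homotopic.Quotient a b) (q : Path.Homotopic.Quotient b c)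
    (f : C(Y, Z)) : (p.trans q).map f = (p.map f).trans (q.map f) := by
  induction p using Quotient.inductionOn
  induction q using Quotient.inductionOn
  exact congrArg Path.Homotopic.Quotient.mk (Path.map_trans _ _ f.continuous)

section WhiskerTopology

variable {Y Z : Type*} [TopologicalSpace Y] [TopologicalSpace Z] {y₀ : Y}

theorem whiskerB_mono {ζ : Path.Homotopic.Quotient y₀ y₀} {U V : Set Y} (h : U ⊆ V) :
    whiskerB ζ U ⊆ whiskerB ζ V := by
  rintro _ ⟨η, hη, rfl⟩
  exact ⟨η, hη.trans h, rfl⟩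

theorem whiskerB_univ (ζ : Path.Homotopic.Quotient y₀ y₀) : whiskerB ζ univ = univ := by
  refine eq_univ_of_forall fun g => ⟨(ζ.symm.trans g).out, subset_univ _, ?_⟩
  rw [show ⟦(ζ.symm.trans g).out⟧ = ζ.symm.trans g from Quotient.out_eq _,
    ← Path.Homotopic.Quotient.trans_assoc, Path.Homotopic.Quotient.trans_symm,
    Path.Homotopic.Quotient.refl_trans]

theorem mem_whiskerB_self (ζ : Path.Homotopic.Quotient y₀ y₀) {U : Set Y} (hU : y₀ ∈ U) :
    ζ ∈ whiskerB ζ U :=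
  ⟨Path.refl y₀, by simpa using hU, (Path.Homotopic.Quotient.trans_refl ζ).symm⟩

theorem whiskerB_subset_of_mem {ζ g : Path.Homotopic.Quotient y₀ y₀} {U : Set Y}
    (hg : g ∈ whiskerB ζ U) : whiskerB g U ⊆ whiskerB ζ U := by
  obtain ⟨η, hη, rfl⟩ := hg
  rintro _ ⟨θ, hθ, rfl⟩
  refine ⟨η.trans θ, ?_, Path.Homotopic.Quotient.trans_assoc _ _ _⟩
  rw [Path.trans_range]
  exact union_subset hη hθ

theorem isOpen_whiskerB (ζ : Path.Homotopic.Quotient y₀ y₀) {U : Set Y} (hU : IsOpen U)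
    (hy₀ : y₀ ∈ U) : IsOpen (whiskerB ζ U) :=
  GenerateOpen.basic _ ⟨ζ, U, hU, hy₀, rfl⟩

theorem whiskerB_mem_nhds (ζ : Path.Homotopic.Quotient y₀ y₀) {U : Set Y} (hU : IsOpen U)
    (hy₀ : y₀ ∈ U) : whiskerB ζ U ∈ 𝓝 ζ :=
  (isOpen_whiskerB ζ hU hy₀).mem_nhds (mem_whiskerB_self ζ hy₀)

theorem continuous_whisker_of_forall_whiskerB {T : Type*} [TopologicalSpace T]
    {f : T → Path.Homotopic.Quotient y₀ y₀}
    (hf : ∀ t (U : Set Y), IsOpen U → y₀ ∈ U → f ⁻¹' whiskerB (f t) U ∈ 𝓝 t) :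
    Continuous f := by
  refine continuous_generateFrom_iff.mpr ?_
  rintro _ ⟨ζ, U, hU, hy₀, rfl⟩
  refine isOpen_iff_mem_nhds.mpr fun t ht => ?_
  exact Filter.mem_of_superset (hf t U hU hy₀) (preimage_mono (whiskerB_subset_of_mem ht))

theorem map_mem_whiskerB (f : C(Y, Z)) {ζ g : Path.Homotopic.Quotient y₀ y₀} {U : Set Z}
    (hg : g ∈ whiskerB ζ (f ⁻¹' U)) : g.map f ∈ whiskerB (ζ.map f) U := by
  obtain ⟨η, hη, rfl⟩ := hg
  refine ⟨η.map f.continuous, ?_, Path.Homotopic.Quotient.map_trans _ _ f⟩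
  rw [Path.map_coe, range_comp]
  exact image_subset_iff.mpr hη

theorem continuous_map_whisker (f : C(Y, Z)) :
    Continuous fun g : Path.Homotopic.Quotient y₀ y₀ => g.map f :=
  continuous_whisker_of_forall_whiskerB fun g _ hU hy₀ =>
    Filter.mem_of_superset (whiskerB_mem_nhds g (hU.preimage f.continuous) hy₀)
      fun _ => map_mem_whiskerB f

end WhiskerTopology

section Pi

variable {ι : Type*} {Y : ι → Type*} [∀ i, TopologicalSpace (Y i)] {y : ∀ i, Y i}

theorem pi_mem_whiskerB_pi {q g : ∀ i, Path.Homotopic.Quotient (y i) (y i)}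
    {u : ∀ i, Set (Y i)} (h : ∀ i, g i ∈ whiskerB (q i) (u i)) :
    Path.Homotopic.pi g ∈ whiskerB (Path.Homotopic.pi q) (univ.pi u) := by
  choose θ hθ hg using h
  refine ⟨Path.pi θ, ?_, ?_⟩
  · rintro _ ⟨t, rfl⟩ i -
    exact hθ i ⟨t, rfl⟩
  · rw [funext hg]
    exact (Path.Homotopic.comp_pi_eq_pi_comp q fun i => ⟦θ i⟧).symm.trans
      (congrArg _ (Path.Homotopic.pi_lift θ))

/-- Outside the finitely many coordinates constrained by a product neighbourhood of `y`, the
basic set `whiskerB (q i) univ` is everything, so a finite cylinder of basic sets suffices. -/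
theorem continuous_pi_whisker :
    Continuous (Path.Homotopic.pi : (∀ i, Path.Homotopic.Quotient (y i) (y i)) → _) := by
  classical
  refine continuous_whisker_of_forall_whiskerB fun q U hU hy => ?_
  obtain ⟨I, u, hu, hIU⟩ := isOpen_pi_iff.mp hU y hy
  have hcyl : (I : Set ι).pi (fun i => whiskerB (q i) (u i)) ∈ 𝓝 q :=
    set_pi_mem_nhds I.finite_toSet fun i hi => whiskerB_mem_nhds _ (hu i hi).1 (hu i hi).2
  refine Filter.mem_of_superset hcyl fun g hg => ?_
  have hpi := pi_mem_whiskerB_pi (g := g) (q := q)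
    (u := fun i => if i ∈ (I : Set ι) then u i else univ) fun i => by
      by_cases hi : i ∈ (I : Set ι)
      · simpa only [hi, if_true] using hg i hi
      · simp only [hi, if_false, whiskerB_univ, mem_univ]
  rw [pi_univ_ite] at hpi
  exact whiskerB_mono hIU hpi

end Pi

/-- For a family of pointed spaces `(X i, x i)`, the canonical group isomorphism
`Φ : π₁^wh(∏ᵢ Xᵢ, (xᵢ)) → ∏ᵢ π₁^wh(Xᵢ, xᵢ)`, `Φ([ζ]) = ([pᵢ ∘ ζ])ᵢ`, is a homeomorphism
onto the product of the whisker-topologized fundamental groups. -/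
theorem whisker_prod_homeomorph {ι : Type u} {X : ι → Type v}
    [∀ i, TopologicalSpace (X i)] (x : ∀ i, X i) :
    let Φ : Path.Homotopic.Quotient x x → ∀ i, Path.Homotopic.Quotient (x i) (x i) :=
      fun q i => q.map ⟨fun y => y i, continuous_apply i⟩
    (∀ a b : Path.Homotopic.Quotient x x,
        Φ (a.trans b) = fun i => (Φ a i).trans (Φ b i)) ∧
    @IsHomeomorph _ _ (whiskerTopology x)
      (@Pi.topologicalSpace ι (fun i => Path.Homotopic.Quotient (x i) (x i))
        (fun i => whiskerTopology (x i))) Φ := by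
  intro Φ
  have hΦ : ∀ a b : Path.Homotopic.Quotient x x,
      Φ (a.trans b) = fun i => (Φ a i).trans (Φ b i) :=
    fun a b => funext fun i => Path.Homotopic.Quotient.map_trans a b _
  let e : Path.Homotopic.Quotient x x ≃ ∀ i, Path.Homotopic.Quotient (x i) (x i) :=
    ⟨Φ, Path.Homotopic.pi, Path.Homotopic.pi_proj, fun g => funext (Path.Homotopic.proj_pi · g)⟩
  exact ⟨hΦ, (Homeomorph.mk e (continuous_pi fun i => continuous_map_whisker _)
    continuous_pi_whisker).isHomeomorph⟩
end

section
/- For a pointed topological space (X, x₀), π₁^wh(X, x₀) is a topological group if and only if for every [η] ∈ π₁(X, x₀) the conjugation map c_[η] : π₁^wh(X, x₀) → π₁^wh(X, x₀), c_[η]([κ]) = [η][κ][η⁻], is continuous. -/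
/-! The basic neighbourhoods of `g` in `π₁^wh(X, x₀)` are the translates `g · B(U)`, where `B(U)`
is the set of classes of loops in `U`. Hence left translations are always continuous, and since
`c_[η⁻] = L_[η⁻] ∘ R_[η]`, continuity of all conjugations is continuity of all right translations,
i.e. `B(V) · η ⊆ η · B(U)` for small enough `V`. That is all a topological group needs:
`(κ B(V)) (η B(U)) ⊆ κ η B(U) B(U) = κ η B(U)` and `(κ B(V))⁻¹ = B(V) κ⁻¹ ⊆ κ⁻¹ B(U)`. -/

open Set TopologicalSpace

attribute [local instance] Path.Homotopic.setoid

universe u v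

variable {X : Type u} [TopologicalSpace X]

open Filter Topology

namespace Path.Homotopic.Quotient

variable {x₀ x₁ x₂ : X}

@[simp]
theorem symm_symm (γ : Path.Homotopic.Quotient x₀ x₁) : γ.symm.symm = γ := by
  induction γ with | mk p => rw [← mk_symm, ← mk_symm, Path.symm_symm]

theorem trans_symm_rev (γ₀ : Path.Homotopic.Quotient x₀ x₁) (γ₁ : Path.Homotopic.Quotient x₁ x₂) :
    (γ₀.trans γ₁).symm = γ₁.symm.trans γ₀.symm := by
  induction γ₀, γ₁ using Quotient.ind₂ with | mk p q =>
  rw [← mk_trans, ← mk_symm, Path.trans_symm]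
  rfl

end Path.Homotopic.Quotient

attribute [local instance] whiskerTopology

namespace WhiskerTopology

open Path.Homotopic Path.Homotopic.Quotient

variable {x₀ : X} {ζ κ η : Path.Homotopic.Quotient x₀ x₀} {U V : Set X}

theorem whiskerInv_eq_symm (γ : Path.Homotopic.Quotient x₀ x₀) : whiskerInv γ = γ.symm := rfl

theorem mem_whiskerB {g : Path.Homotopic.Quotient x₀ x₀} :
    g ∈ whiskerB ζ U ↔ ∃ a : Path x₀ x₀, range a ⊆ U ∧ g = ζ.trans (mk a) :=
  Iff.rfl

theorem mem_whiskerB_self (hU : x₀ ∈ U) : ζ ∈ whiskerB ζ U :=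
  ⟨Path.refl x₀, by simpa using hU, (Quotient.trans_refl ζ).symm⟩

theorem whiskerB_mono (h : U ⊆ V) : whiskerB ζ U ⊆ whiskerB ζ V := by
  rintro _ ⟨a, ha, rfl⟩
  exact ⟨a, ha.trans h, rfl⟩

theorem whiskerB_subset_of_mem (h : κ ∈ whiskerB ζ U) : whiskerB κ U ⊆ whiskerB ζ U := by
  obtain ⟨a, ha, rfl⟩ := h
  rintro _ ⟨b, hb, rfl⟩
  exact ⟨a.trans b, by simpa [Path.trans_range] using ⟨ha, hb⟩, Quotient.trans_assoc ζ (mk a) (mk b)⟩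

theorem isTopologicalBasis_whiskerB :
    IsTopologicalBasis
      {S | ∃ (ζ : Path.Homotopic.Quotient x₀ x₀) (U : Set X),
        IsOpen U ∧ x₀ ∈ U ∧ S = whiskerB ζ U} where
  exists_subset_inter := by
    rintro _ ⟨ζ, U, hU, hxU, rfl⟩ _ ⟨ζ', U', hU', hxU', rfl⟩ κ ⟨hκ, hκ'⟩
    exact ⟨whiskerB κ (U ∩ U'), ⟨κ, _, hU.inter hU', ⟨hxU, hxU'⟩, rfl⟩,
      mem_whiskerB_self ⟨hxU, hxU'⟩,
      subset_inter ((whiskerB_mono inter_subset_left).trans (whiskerB_subset_of_mem hκ))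
        ((whiskerB_mono inter_subset_right).trans (whiskerB_subset_of_mem hκ'))⟩
  sUnion_eq := eq_univ_of_forall fun ζ =>
    ⟨whiskerB ζ univ, ⟨ζ, univ, isOpen_univ, mem_univ x₀, rfl⟩, mem_whiskerB_self (mem_univ x₀)⟩
  eq_generateFrom := rfl

theorem hasBasis_nhds (ζ : Path.Homotopic.Quotient x₀ x₀) :
    (𝓝 ζ).HasBasis (fun U : Set X => IsOpen U ∧ x₀ ∈ U) (whiskerB ζ) :=
  isTopologicalBasis_whiskerB.nhds_hasBasis.to_hasBasis
    (fun _ ⟨⟨_, U, hU, hxU, hS⟩, hζ⟩ => ⟨U, ⟨hU, hxU⟩, hS ▸ whiskerB_subset_of_mem (hS ▸ hζ)⟩)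
    (fun U hU => ⟨whiskerB ζ U, ⟨⟨ζ, U, hU.1, hU.2, rfl⟩, mem_whiskerB_self hU.2⟩, subset_rfl⟩)

theorem continuousAt_iff_whiskerB {f : Path.Homotopic.Quotient x₀ x₀ → Path.Homotopic.Quotient x₀ x₀} :
    ContinuousAt f ζ ↔ ∀ U : Set X, IsOpen U ∧ x₀ ∈ U → ∃ V : Set X, (IsOpen V ∧ x₀ ∈ V) ∧
      ∀ a : Path x₀ x₀, range a ⊆ V → f (ζ.trans (mk a)) ∈ whiskerB (f ζ) U :=
  ((hasBasis_nhds ζ).tendsto_iff (hasBasis_nhds (f ζ))).trans <|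
    forall₂_congr fun _ _ => exists_congr fun _ => and_congr_right fun _ =>
      ⟨fun h a ha => h _ ⟨a, ha, rfl⟩, fun h _ ⟨a, ha, hg⟩ => hg ▸ h a ha⟩

theorem continuous_trans_left (η : Path.Homotopic.Quotient x₀ x₀) :
    Continuous fun κ : Path.Homotopic.Quotient x₀ x₀ => η.trans κ :=
  continuous_iff_continuousAt.2 fun ζ => continuousAt_iff_whiskerB.2 fun U hU =>
    ⟨U, hU, fun a ha => ⟨a, ha, (Quotient.trans_assoc η ζ (mk a)).symm⟩⟩

theorem continuous_trans_right_of_continuous_conj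
    (h : Continuous fun κ : Path.Homotopic.Quotient x₀ x₀ => (η.symm.trans κ).trans η) :
    Continuous fun κ : Path.Homotopic.Quotient x₀ x₀ => κ.trans η := by
  convert (continuous_trans_left η).comp h using 1
  funext κ
  rw [Function.comp_apply, ← Quotient.trans_assoc, ← Quotient.trans_assoc, Quotient.trans_symm,
    Quotient.refl_trans]

theorem exists_mk_trans_mem_whiskerB (h : ContinuousAt (·.trans η) (Quotient.refl x₀))
    (hU : IsOpen U) (hxU : x₀ ∈ U) :
    ∃ V : Set X, IsOpen V ∧ x₀ ∈ V ∧
      ∀ a : Path x₀ x₀, range a ⊆ V → (mk a).trans η ∈ whiskerB η U := by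
  obtain ⟨V, hV, hVU⟩ := continuousAt_iff_whiskerB.1 h U ⟨hU, hxU⟩
  refine ⟨V, hV.1, hV.2, fun a ha => ?_⟩
  simpa only [Quotient.refl_trans] using hVU a ha

theorem continuous_trans_of_continuousAt_trans_right
    (h : ∀ η : Path.Homotopic.Quotient x₀ x₀, ContinuousAt (·.trans η) (Quotient.refl x₀)) :
    Continuous fun p : Path.Homotopic.Quotient x₀ x₀ × Path.Homotopic.Quotient x₀ x₀ =>
      p.1.trans p.2 := by
  refine continuous_iff_continuousAt.2 fun ⟨κ, η⟩ =>
    (((hasBasis_nhds κ).prod_nhds (hasBasis_nhds η)).tendsto_iff (hasBasis_nhds _)).2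
      fun U hU => ?_
  obtain ⟨V, hV, hxV, hVU⟩ := exists_mk_trans_mem_whiskerB (h η) hU.1 hU.2
  refine ⟨(V, U), ⟨⟨hV, hxV⟩, hU⟩, ?_⟩
  rintro ⟨_, _⟩ ⟨h₁, h₂⟩
  obtain ⟨a, ha, rfl⟩ := mem_whiskerB.1 h₁
  obtain ⟨b, hb, rfl⟩ := mem_whiskerB.1 h₂
  obtain ⟨e, he, hae⟩ := mem_whiskerB.1 (hVU a ha)
  refine mem_whiskerB.2 ⟨e.trans b, by simpa [Path.trans_range] using ⟨he, hb⟩, ?_⟩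
  calc (κ.trans (mk a)).trans (η.trans (mk b))
      = κ.trans (((mk a).trans η).trans (mk b)) := by simp only [Quotient.trans_assoc]
    _ = κ.trans ((η.trans (mk e)).trans (mk b)) := by rw [hae]
    _ = (κ.trans η).trans (mk (e.trans b)) := by simp only [Quotient.trans_assoc, mk_trans]

theorem continuous_whiskerInv_of_continuousAt_trans_right
    (h : ∀ η : Path.Homotopic.Quotient x₀ x₀, ContinuousAt (·.trans η) (Quotient.refl x₀)) :
    Continuous (whiskerInv (x₀ := x₀)) := by
  refine continuous_iff_continuousAt.2 fun κ => continuousAt_iff_whiskerB.2 fun U hU => ?_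
  obtain ⟨V, hV, hxV, hVU⟩ := exists_mk_trans_mem_whiskerB (h κ.symm) hU.1 hU.2
  refine ⟨V, ⟨hV, hxV⟩, fun a ha => ?_⟩
  change (κ.trans (mk a)).symm ∈ whiskerB κ.symm U
  rw [Quotient.trans_symm_rev]
  exact hVU a.symm (by rwa [Path.symm_range])

theorem isWhiskerTopGroup_of_continuousAt_trans_right
    (h : ∀ η : Path.Homotopic.Quotient x₀ x₀, ContinuousAt (·.trans η) (Quotient.refl x₀)) :
    IsWhiskerTopGroup x₀ :=
  ⟨continuous_trans_of_continuousAt_trans_right h,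
    continuous_whiskerInv_of_continuousAt_trans_right h⟩

end WhiskerTopology

open Path.Homotopic WhiskerTopology in
/-- `π₁^wh(X, x₀)` is a topological group if and only if every conjugation
`c_[η] : [κ] ↦ [η][κ][η⁻]` is continuous. -/
theorem whisker_topGroup_iff_conjugation_continuous (x₀ : X) :
    IsWhiskerTopGroup x₀ ↔
    ∀ η : Path.Homotopic.Quotient x₀ x₀,
      @Continuous _ _ (whiskerTopology x₀) (whiskerTopology x₀)
        (fun κ : Path.Homotopic.Quotient x₀ x₀ => (η.trans κ).trans (whiskerInv η)) := by
  refine ⟨fun ⟨hmul, _⟩ η => ?_, fun hconj => ?_⟩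
  · exact hmul.comp ((hmul.comp (continuous_const.prodMk continuous_id)).prodMk continuous_const)
  · refine isWhiskerTopGroup_of_continuousAt_trans_right fun η => ?_
    have hconj' := hconj η.symm
    simp only [whiskerInv_eq_symm, Quotient.symm_symm] at hconj'
    exact (continuous_trans_right_of_continuous_conj hconj').continuousAt
end

section
/- If (X, x₀) is a pointed topological space whose fundamental group π₁(X, x₀) is abelian, then π₁^wh(X, x₀) is a topological group. -/
open Set TopologicalSpace

attribute [local instance] Path.Homotopic.setoid

universe u v

variable {X : Type u} [TopologicalSpace X]

/-!
Each basic set `B([ζ],U)` is the translate `[ζ]·L_U` of the set `L_U` of classes of loops in `U`,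
which is closed under products and inverses (concatenation and reversal stay inside `U`).
So `b ∈ B(a,U)` gives `B(b,U) ⊆ B(a,U)`, and continuity reduces to multiplication mapping
`B(a,U) × B(b,U)` into `B(ab,U)` and inversion mapping `B(a,U)` into `B(a⁻¹,U)`.
Commutativity moves the `L_U` factors to the right: `(aλ)(bμ) = ab·μλ` and `(aλ)⁻¹ = a⁻¹·λ⁻¹`.
-/

open Filter Topology Path.Homotopic.Quotient

attribute [local instance] whiskerTopology

section WhiskerTopology

variable {x₀ : X}

lemma mem_whiskerB {ζ g : Path.Homotopic.Quotient x₀ x₀} {U : Set X} :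
    g ∈ whiskerB ζ U ↔ ∃ η : Path x₀ x₀, range η ⊆ U ∧ g = ζ.trans (mk η) :=
  Iff.rfl

lemma trans_mem_whiskerB {ζ a : Path.Homotopic.Quotient x₀ x₀} {U : Set X}
    (ha : a ∈ whiskerB ζ U) {η : Path x₀ x₀} (hη : range η ⊆ U) :
    a.trans (mk η) ∈ whiskerB ζ U := by
  obtain ⟨η₀, hη₀, rfl⟩ := mem_whiskerB.1 ha
  exact mem_whiskerB.2
    ⟨η₀.trans η, Path.trans_range η₀ η ▸ union_subset hη₀ hη, trans_assoc _ _ _⟩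

lemma self_mem_whiskerB (a : Path.Homotopic.Quotient x₀ x₀) {U : Set X} (hU : x₀ ∈ U) :
    a ∈ whiskerB a U :=
  mem_whiskerB.2 ⟨Path.refl x₀, by simpa using hU, (trans_refl a).symm⟩

lemma whiskerB_subset_whiskerB {ζ a : Path.Homotopic.Quotient x₀ x₀} {U : Set X}
    (ha : a ∈ whiskerB ζ U) : whiskerB a U ⊆ whiskerB ζ U := fun _ hg => by
  obtain ⟨η, hη, rfl⟩ := mem_whiskerB.1 hg
  exact trans_mem_whiskerB ha hη

lemma whiskerB_mem_nhds_s6 (a : Path.Homotopic.Quotient x₀ x₀) {U : Set X} (hUo : IsOpen U)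
    (hU : x₀ ∈ U) : whiskerB a U ∈ 𝓝 a :=
  (isOpen_generateFrom_of_mem ⟨a, U, hUo, hU, rfl⟩ : IsOpen[whiskerTopology x₀] _).mem_nhds
    (self_mem_whiskerB a hU)

lemma continuous_of_eventually_mem_whiskerB {Y : Type v} [TopologicalSpace Y]
    {f : Y → Path.Homotopic.Quotient x₀ x₀}
    (hf : ∀ y U, IsOpen U → x₀ ∈ U → ∀ᶠ z in 𝓝 y, f z ∈ whiskerB (f y) U) : Continuous f := by
  rw [whiskerTopology, continuous_generateFrom_iff]
  rintro _ ⟨ζ, U, hUo, hU, rfl⟩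
  exact isOpen_iff_mem_nhds.2 fun y hy =>
    (hf y U hUo hU).mono fun z hz => whiskerB_subset_whiskerB hy hz

lemma whiskerInv_trans (a b : Path.Homotopic.Quotient x₀ x₀) :
    whiskerInv (a.trans b) = (whiskerInv b).trans (whiskerInv a) := by
  induction a
  induction b
  exact congrArg _ (Path.trans_symm _ _)

variable (hcomm : ∀ a b : Path.Homotopic.Quotient x₀ x₀, a.trans b = b.trans a)
include hcomm

lemma trans_mem_whiskerB_trans {a b a' b' : Path.Homotopic.Quotient x₀ x₀} {U : Set X}
    (hU : x₀ ∈ U) (ha' : a' ∈ whiskerB a U) (hb' : b' ∈ whiskerB b U) :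
    a'.trans b' ∈ whiskerB (a.trans b) U := by
  obtain ⟨η₁, hη₁, rfl⟩ := mem_whiskerB.1 ha'
  obtain ⟨η₂, hη₂, rfl⟩ := mem_whiskerB.1 hb'
  rw [trans_assoc a, hcomm _ (b.trans _), ← trans_assoc a, ← trans_assoc a]
  exact trans_mem_whiskerB (trans_mem_whiskerB (self_mem_whiskerB _ hU) hη₂) hη₁

lemma whiskerInv_mem_whiskerB_whiskerInv {a a' : Path.Homotopic.Quotient x₀ x₀} {U : Set X}
    (hU : x₀ ∈ U) (ha' : a' ∈ whiskerB a U) : whiskerInv a' ∈ whiskerB (whiskerInv a) U := by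
  obtain ⟨η, hη, rfl⟩ := mem_whiskerB.1 ha'
  rw [whiskerInv_trans, hcomm]
  exact trans_mem_whiskerB (self_mem_whiskerB _ hU) (by rwa [Path.symm_range])

end WhiskerTopology

/-- If `π₁(X, x₀)` is abelian, then `π₁^wh(X, x₀)` is a topological group. -/
theorem whisker_topGroup_of_abelian (x₀ : X)
    (h : ∀ a b : Path.Homotopic.Quotient x₀ x₀, a.trans b = b.trans a) :
    IsWhiskerTopGroup x₀ := by
  refine ⟨continuous_of_eventually_mem_whiskerB fun p U hUo hU => ?_,
    continuous_of_eventually_mem_whiskerB fun a U hUo hU => ?_⟩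
  · filter_upwards [prod_mem_nhds (whiskerB_mem_nhds_s6 p.1 hUo hU) (whiskerB_mem_nhds_s6 p.2 hUo hU)]
      with q hq
    exact trans_mem_whiskerB_trans h hU hq.1 hq.2
  · filter_upwards [whiskerB_mem_nhds_s6 a hUo hU] with b hb
    exact whiskerInv_mem_whiskerB_whiskerInv h hU hb
end
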